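/- Let G = (A ∪ B ∪ C, E) be a finite 3-partite undirected graph and let D be the directed graph constructed from G as in the {s,*}-EdgeBiCut reduction. If R ⊆ A ∪ B ∪ C is a vertex cover of G and F := {(v₁,v₂) : v ∈ R} is the corresponding set of vertex arcs, then in the directed graph obtained from D by deleting the arcs in F there is no directed s→t path and no directed t→s path. -/
import Mathlib


/-- The arcs of the digraph `D` of the `{s,*}`-EdgeBiCut reduction from a 3-partite
graph `G` with parts `A`, `B`, `C`. Vertices: `Sum.inl (v, false)` is the first copy
`v₁`, `Sum.inl (v, true)` is the second copy `v₂`, `s = Sum.inr false`,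
`t = Sum.inr true`. -/
def sbArc {V : Type*} (G : SimpleGraph V) (A B C : Set V) :
    ((V × Bool) ⊕ Bool) → ((V × Bool) ⊕ Bool) → Prop := fun x y =>
  match x, y with
  -- vertex arcs (v₁, v₂)
  | Sum.inl (v, false), Sum.inl (w, true) => v = w
  -- backward arcs (c₁, a₁)
  | Sum.inl (v, false), Sum.inl (w, false) => v ∈ C ∧ w ∈ A
  -- backward arcs (c₂, a₂)
  | Sum.inl (v, true), Sum.inl (w, true) => v ∈ C ∧ w ∈ A
  -- forward arcs (a₂,b₁), (a₂,c₁), (b₂,c₁) for edges of G; backward AA and CC arcs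
  | Sum.inl (v, true), Sum.inl (w, false) =>
      (G.Adj v w ∧ ((v ∈ A ∧ w ∈ B) ∨ (v ∈ A ∧ w ∈ C) ∨ (v ∈ B ∧ w ∈ C))) ∨
      (v ∈ A ∧ w ∈ A) ∨ (v ∈ C ∧ w ∈ C)
  -- arcs (s, a₁) and (s, b₁)
  | Sum.inr false, Sum.inl (w, false) => w ∈ A ∨ w ∈ B
  -- arcs (t, a₁)
  | Sum.inr true, Sum.inl (w, false) => w ∈ A
  -- arcs (b₂, s) and (c₂, s)
  | Sum.inl (v, true), Sum.inr false => v ∈ B ∨ v ∈ C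
  -- arcs (c₂, t)
  | Sum.inl (v, true), Sum.inr true => v ∈ C
  | _, _ => False

/-- if `R` is a vertex cover of the 3-partite graph `G`, then after
deleting the vertex arcs `{(v₁,v₂) : v ∈ R}` from `D`, there is no directed `s → t`
path and no directed `t → s` path. -/
theorem stmt_11 {V : Type*} [Fintype V] (G : SimpleGraph V) (A B C : Set V)
    (hAB : Disjoint A B) (hAC : Disjoint A C) (hBC : Disjoint B C)
    (hcover : A ∪ B ∪ C = Set.univ)
    (hpartite : ∀ x y, G.Adj x y →
      ¬ ((x ∈ A ∧ y ∈ A) ∨ (x ∈ B ∧ y ∈ B) ∨ (x ∈ C ∧ y ∈ C)))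
    (R : Set V) (hvc : ∀ x y, G.Adj x y → x ∈ R ∨ y ∈ R) :
    ¬ Relation.ReflTransGen
        (fun x y => sbArc G A B C x y ∧
          ¬ ∃ v ∈ R, x = Sum.inl (v, false) ∧ y = Sum.inl (v, true))
        (Sum.inr false) (Sum.inr true) ∧
    ¬ Relation.ReflTransGen
        (fun x y => sbArc G A B C x y ∧
          ¬ ∃ v ∈ R, x = Sum.inl (v, false) ∧ y = Sum.inl (v, true))
        (Sum.inr true) (Sum.inr false) := by
  have dAB : ∀ {v}, v ∈ A → v ∈ B → False := fun hx hy => hAB.ne_of_mem hx hy rfl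
  have dAC : ∀ {v}, v ∈ A → v ∈ C → False := fun hx hy => hAC.ne_of_mem hx hy rfl
  have dBC : ∀ {v}, v ∈ B → v ∈ C → False := fun hx hy => hBC.ne_of_mem hx hy rfl
  constructor
  · intro h
    have key : ∀ x : (V × Bool) ⊕ Bool,
        Relation.ReflTransGen
          (fun x y => sbArc G A B C x y ∧
            ¬ ∃ v ∈ R, x = Sum.inl (v, false) ∧ y = Sum.inl (v, true))
          (Sum.inr false) x →
        (match x with
          | Sum.inr b => b = false
          | Sum.inl (v, false) => v ∈ A ∨ v ∈ B ∨ (v ∈ C ∧ v ∈ R)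
          | Sum.inl (v, true) => (v ∈ A ∨ v ∈ B) ∧ v ∉ R) := by
      intro x hx
      induction hx with
      | refl => rfl
      | @tail b c hab harc ih =>
        obtain ⟨harc, hdel⟩ := harc
        rcases b with ⟨v, _ | _⟩ | (_ | _) <;> rcases c with ⟨w, _ | _⟩ | (_ | _) <;>
            simp only [sbArc] at harc ih ⊢
        · exact Or.inl harc.2
        · subst harc
          have hvR : v ∉ R := fun hvR => hdel ⟨v, hvR, rfl, rfl⟩
          rcases ih with h | h | ⟨_, h⟩
          · exact ⟨Or.inl h, hvR⟩
          · exact ⟨Or.inr h, hvR⟩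
          · exact absurd h hvR
        · rcases harc with ⟨hadj, ⟨hv, hw⟩ | ⟨hv, hw⟩ | ⟨hv, hw⟩⟩ | ⟨hv, hw⟩ | ⟨hv, hw⟩
          · exact Or.inr (Or.inl hw)
          · rcases hvc _ _ hadj with hr | hr
            · exact absurd hr ih.2
            · exact Or.inr (Or.inr ⟨hw, hr⟩)
          · rcases hvc _ _ hadj with hr | hr
            · exact absurd hr ih.2
            · exact Or.inr (Or.inr ⟨hw, hr⟩)
          · exact Or.inl hw
          · exact ih.1.elim (fun h => (dAC h hv).elim) (fun h => (dBC h hv).elim)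
        · exact ih.1.elim (fun h => (dAC h harc.1).elim) (fun h => (dBC h harc.1).elim)
        · exact ih.1.elim (fun h => (dAC h harc).elim) (fun h => (dBC h harc).elim)
        · exact harc.imp id Or.inl
        · simp at ih
    have := key _ h
    simp at this
  · intro h
    have key : ∀ x : (V × Bool) ⊕ Bool,
        Relation.ReflTransGen
          (fun x y => sbArc G A B C x y ∧
            ¬ ∃ v ∈ R, x = Sum.inl (v, false) ∧ y = Sum.inl (v, true))
          (Sum.inr true) x →
        (match x with
          | Sum.inr b => b = true
          | Sum.inl (v, false) => v ∈ A ∨ (v ∈ B ∧ v ∈ R) ∨ (v ∈ C ∧ v ∈ R)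
          | Sum.inl (v, true) => v ∈ A ∧ v ∉ R) := by
      intro x hx
      induction hx with
      | refl => rfl
      | @tail b c hab harc ih =>
        obtain ⟨harc, hdel⟩ := harc
        rcases b with ⟨v, _ | _⟩ | (_ | _) <;> rcases c with ⟨w, _ | _⟩ | (_ | _) <;>
            simp only [sbArc] at harc ih ⊢
        · exact Or.inl harc.2
        · subst harc
          have hvR : v ∉ R := fun hvR => hdel ⟨v, hvR, rfl, rfl⟩
          rcases ih with h | ⟨_, h⟩ | ⟨_, h⟩
          · exact ⟨h, hvR⟩
          · exact absurd h hvR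
          · exact absurd h hvR
        · rcases harc with ⟨hadj, ⟨hv, hw⟩ | ⟨hv, hw⟩ | ⟨hv, hw⟩⟩ | ⟨hv, hw⟩ | ⟨hv, hw⟩
          · rcases hvc _ _ hadj with hr | hr
            · exact absurd hr ih.2
            · exact Or.inr (Or.inl ⟨hw, hr⟩)
          · rcases hvc _ _ hadj with hr | hr
            · exact absurd hr ih.2
            · exact Or.inr (Or.inr ⟨hw, hr⟩)
          · exact (dAB ih.1 hv).elim
          · exact Or.inl hw
          · exact (dAC ih.1 hv).elim
        · exact (dAC ih.1 harc.1).elim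
        · exact harc.elim (fun h => (dAB ih.1 h).elim) (fun h => (dAC ih.1 h).elim)
        · simp at ih
        · exact Or.inl harc
    have := key _ h
    simp at this
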